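/- arXiv:2204.00320 — 5 statements merged into one kernel-verified Lean document; each statement's English description precedes it below -/
import Mathlib

section
/- Let N be a finite index set, a, b : N → ℝ with a i ≥ 0 and b i ≥ 0 for all i, σ ≥ 0 and c ≥ 0. Let P be a finite set of columns and d : P → N → ℝ with d p i ∈ {0,1} for all p, i, such that every column p ∈ P is feasible, i.e. ∑_{i∈N} a_i·(d p i) + σ·√(∑_{i∈N} b_i·(d p i)) ≤ c. Then for every λ : P → ℝ with 0 ≤ λ p ≤ 1 for all p, setting v p i := (d p i)·(λ p), each bin-capacity constraint of the continuous second-order-cone relaxation holds: for every p ∈ P, ∑_{i∈N} a_i·(v p i) + σ·√(∑_{i∈N} b_i·(v p i)²) ≤ c·(λ p). (This is the core of the claim that the LP relaxation of the set cover formulation is at least as tight as the continuous SOCP relaxation of the BSOCP formulation.) -/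
/-- Each feasible binary column, scaled by a multiplier `λ p ∈ [0,1]`, satisfies the
bin-capacity constraint of the continuous SOCP relaxation. -/
theorem stmt_0 (N P : Type*) [Fintype N] [Fintype P]
    (a b : N → ℝ) (ha : ∀ i, 0 ≤ a i) (hb : ∀ i, 0 ≤ b i)
    (σ c : ℝ) (hσ : 0 ≤ σ) (hc : 0 ≤ c)
    (d : P → N → ℝ) (hd : ∀ p i, d p i = 0 ∨ d p i = 1)
    (hfeas : ∀ p, ∑ i, a i * d p i + σ * Real.sqrt (∑ i, b i * d p i) ≤ c)
    (lam : P → ℝ) (hlam : ∀ p, 0 ≤ lam p ∧ lam p ≤ 1) :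
    ∀ p, ∑ i, a i * (d p i * lam p)
        + σ * Real.sqrt (∑ i, b i * (d p i * lam p) ^ 2) ≤ c * lam p := by
  intro p
  obtain ⟨hl0, hl1⟩ := hlam p
  have hsum : ∑ i, b i * (d p i * lam p) ^ 2 = lam p ^ 2 * ∑ i, b i * d p i := by
    rw [Finset.mul_sum]
    refine Finset.sum_congr rfl fun i _ => ?_
    rcases hd p i with h | h <;> rw [h] <;> ring
  have hsqrt : Real.sqrt (∑ i, b i * (d p i * lam p) ^ 2)
      = lam p * Real.sqrt (∑ i, b i * d p i) := by
    rw [hsum, Real.sqrt_mul (sq_nonneg _), Real.sqrt_sq hl0]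
  have hasum : ∑ i, a i * (d p i * lam p) = lam p * ∑ i, a i * d p i := by
    rw [Finset.mul_sum]; exact Finset.sum_congr rfl fun i _ => by ring
  rw [hsqrt, hasum]
  calc lam p * ∑ i, a i * d p i + σ * (lam p * Real.sqrt (∑ i, b i * d p i))
      = lam p * (∑ i, a i * d p i + σ * Real.sqrt (∑ i, b i * d p i)) := by ring
    _ ≤ lam p * c := by
        exact mul_le_mul_of_nonneg_left (hfeas p) hl0
    _ = c * lam p := mul_comm _ _
end

section
/- (Validity of the extended outer cut.) Let N be a finite index set, a, b : N → ℝ with a i ≥ 0 and b i ≥ 0 for all i, σ ≥ 0 and c ≥ 0. Let x̂ : N → ℝ be binary (x̂ i ∈ {0,1} for all i) with ∑_{i∈N} b_i x̂_i > 0. Then for every x : N → ℝ with 0 ≤ x i ≤ 1 for all i satisfying ∑_{i∈N} a_i x_i + σ·√(∑_{i∈N} b_i x_i²) ≤ c, the linear inequality ∑_{i∈N} a_i x_i + (σ/√(∑_{i∈N} b_i x̂_i))·∑_{i∈N} b_i x̂_i x_i ≤ c holds. -/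
/-- Validity of the extended outer cut for the continuous relaxation of the
submodular knapsack set. -/
theorem stmt_3 (N : Type*) [Fintype N]
    (a b : N → ℝ) (ha : ∀ i, 0 ≤ a i) (hb : ∀ i, 0 ≤ b i)
    (σ c : ℝ) (hσ : 0 ≤ σ) (hc : 0 ≤ c)
    (xh : N → ℝ) (hxh : ∀ i, xh i = 0 ∨ xh i = 1)
    (hpos : 0 < ∑ i, b i * xh i)
    (x : N → ℝ) (hx : ∀ i, 0 ≤ x i ∧ x i ≤ 1)
    (hfeas : ∑ i, a i * x i + σ * Real.sqrt (∑ i, b i * (x i) ^ 2) ≤ c) :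
    ∑ i, a i * x i
      + (σ / Real.sqrt (∑ i, b i * xh i)) * ∑ i, b i * xh i * x i ≤ c := by
  set S := ∑ i, b i * xh i with hS
  have hsq : 0 < Real.sqrt S := Real.sqrt_pos.2 hpos
  have hxsq : (0:ℝ) ≤ ∑ i, b i * (x i)^2 := by
    apply Finset.sum_nonneg; intro i _
    exact mul_nonneg (hb i) (sq_nonneg _)
  -- Cauchy–Schwarz
  have key : ∑ i, b i * xh i * x i ≤ Real.sqrt S * Real.sqrt (∑ i, b i * (x i)^2) := by
    have h := Finset.sum_mul_sq_le_sq_mul_sq Finset.univ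
      (fun i => Real.sqrt (b i) * xh i) (fun i => Real.sqrt (b i) * x i)
    have e1 : ∑ i, (Real.sqrt (b i) * xh i) * (Real.sqrt (b i) * x i)
        = ∑ i, b i * xh i * x i := by
      apply Finset.sum_congr rfl; intro i _
      have : Real.sqrt (b i) * Real.sqrt (b i) = b i := Real.mul_self_sqrt (hb i)
      ring_nf
      rw [Real.sq_sqrt (hb i)]; ring
    have e2 : ∑ i, (Real.sqrt (b i) * xh i)^2 = S := by
      apply Finset.sum_congr rfl; intro i _
      rcases hxh i with h0 | h0 <;>
        simp [h0, mul_pow, Real.sq_sqrt (hb i)]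
    have e3 : ∑ i, (Real.sqrt (b i) * x i)^2 = ∑ i, b i * (x i)^2 := by
      apply Finset.sum_congr rfl; intro i _
      rw [mul_pow, Real.sq_sqrt (hb i)]
    rw [e1, e2, e3] at h
    have hnn : (0:ℝ) ≤ Real.sqrt S * Real.sqrt (∑ i, b i * (x i)^2) :=
      mul_nonneg (Real.sqrt_nonneg _) (Real.sqrt_nonneg _)
    nlinarith [Real.sq_sqrt hpos.le, Real.sq_sqrt hxsq,
      Real.sqrt_nonneg S, Real.sqrt_nonneg (∑ i, b i * (x i)^2)]
  have h2 : (σ / Real.sqrt S) * ∑ i, b i * xh i * x i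
      ≤ σ * Real.sqrt (∑ i, b i * (x i)^2) := by
    rw [div_mul_eq_mul_div, div_le_iff₀ hsq]
    calc σ * ∑ i, b i * xh i * x i
        ≤ σ * (Real.sqrt S * Real.sqrt (∑ i, b i * (x i)^2)) := by
          apply mul_le_mul_of_nonneg_left key hσ
      _ = σ * Real.sqrt (∑ i, b i * (x i)^2) * Real.sqrt S := by ring
  linarith
end

section
/- (Finite cut description of the submodular knapsack set.) Let N be a finite index set, a, b : N → ℝ with a i ≥ 0 and b i > 0 for all i, σ ≥ 0 and c ≥ 0. For a binary vector x : N → ℝ (x i ∈ {0,1} for all i), the following are equivalent: (i) ∑_{i∈N} a_i x_i + σ·√(∑_{i∈N} b_i x_i²) ≤ c; (ii) for every binary x̂ : N → ℝ with ∑_{i∈N} a_i x̂_i + σ·√(∑_{i∈N} b_i x̂_i²) > c, the cut ∑_{i∈N} a_i x_i + (σ/√(∑_{i∈N} b_i x̂_i))·∑_{i∈N} b_i x̂_i x_i ≤ c holds. That is, C = O ∩ {0,1}^N, where O is the polyhedron defined by all cuts generated by infeasible binary points. -/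
/-- Finite cut description of the submodular knapsack set: a binary point is feasible
iff it satisfies all outer cuts generated by infeasible binary points. -/
theorem stmt_5 (N : Type*) [Fintype N]
    (a b : N → ℝ) (ha : ∀ i, 0 ≤ a i) (hb : ∀ i, 0 < b i)
    (σ c : ℝ) (hσ : 0 ≤ σ) (hc : 0 ≤ c)
    (x : N → ℝ) (hx : ∀ i, x i = 0 ∨ x i = 1) :
    (∑ i, a i * x i + σ * Real.sqrt (∑ i, b i * (x i) ^ 2) ≤ c) ↔
      (∀ xh : N → ℝ, (∀ i, xh i = 0 ∨ xh i = 1) →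
        c < ∑ i, a i * xh i + σ * Real.sqrt (∑ i, b i * (xh i) ^ 2) →
        ∑ i, a i * x i
          + (σ / Real.sqrt (∑ i, b i * xh i)) * ∑ i, b i * xh i * x i ≤ c) := by
  have hx01 : ∀ i, 0 ≤ x i ∧ x i ≤ 1 := fun i => by rcases hx i with h | h <;> simp [h]
  have hx2 : ∀ i, x i ^ 2 = x i := fun i => by rcases hx i with h | h <;> simp [h]
  constructor
  · intro hfeas xh hxh hinf
    have hxh01 : ∀ i, 0 ≤ xh i ∧ xh i ≤ 1 := fun i => by rcases hxh i with h | h <;> simp [h]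
    set Sx := ∑ i, b i * x i ^ 2 with hSx
    set Sh := ∑ i, b i * xh i with hSh
    set T := ∑ i, b i * xh i * x i with hT
    have hT0 : 0 ≤ T :=
      Finset.sum_nonneg fun i _ =>
        mul_nonneg (mul_nonneg (hb i).le (hxh01 i).1) (hx01 i).1
    have hTSx : T ≤ Sx := Finset.sum_le_sum fun i _ => by
      have h1 := (hx01 i).1
      have h2 := (hxh01 i).2
      have := (hb i).le
      nlinarith [hx2 i, mul_nonneg (mul_nonneg this h1) (sub_nonneg.mpr h2)]
    have hTSh : T ≤ Sh := Finset.sum_le_sum fun i _ => by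
      have h1 := (hxh01 i).1
      have h2 := (hx01 i).2
      have := (hb i).le
      nlinarith [mul_nonneg (mul_nonneg this h1) (sub_nonneg.mpr h2)]
    have hdiv : T / Real.sqrt Sh ≤ Real.sqrt T := by
      rcases eq_or_lt_of_le (le_trans hT0 hTSh) with h | h
      · have hT0' : T = 0 := le_antisymm (h ▸ hTSh) hT0
        simp [hT0', ← h]
      · rw [div_le_iff₀ (Real.sqrt_pos.mpr h)]
        calc T = Real.sqrt T * Real.sqrt T := (Real.mul_self_sqrt hT0).symm
          _ ≤ Real.sqrt T * Real.sqrt Sh :=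
            mul_le_mul_of_nonneg_left (Real.sqrt_le_sqrt hTSh) (Real.sqrt_nonneg _)
    have key : σ / Real.sqrt Sh * T ≤ σ * Real.sqrt Sx := by
      have h1 : σ / Real.sqrt Sh * T = σ * (T / Real.sqrt Sh) := by ring
      rw [h1]
      exact mul_le_mul_of_nonneg_left
        (hdiv.trans (Real.sqrt_le_sqrt hTSx)) hσ
    linarith
  · intro h
    by_contra hlt
    push_neg at hlt
    have hcut := h x hx hlt
    have hbx : (∑ i, b i * x i * x i) = ∑ i, b i * x i ^ 2 := by
      apply Finset.sum_congr rfl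
      intro i _
      rcases hx i with h | h <;> simp [h]
    have hbx2 : (∑ i, b i * x i) = ∑ i, b i * x i ^ 2 := by
      apply Finset.sum_congr rfl
      intro i _
      rcases hx i with h | h <;> simp [h]
    rw [hbx, hbx2] at hcut
    have : σ / Real.sqrt (∑ i, b i * x i ^ 2) * (∑ i, b i * x i ^ 2)
        = σ * Real.sqrt (∑ i, b i * x i ^ 2) := by
      rw [div_mul_eq_mul_div, mul_div_assoc, Real.div_sqrt]
    rw [this] at hcut
    linarith
end

section
/- (Submodularity of the capacity usage set function.) Let N be a finite ground set, a, b : N → ℝ with a i ≥ 0 and b i ≥ 0 for all i, and σ ≥ 0. Define F(S) = ∑_{i∈S} a_i + σ·√(∑_{i∈S} b_i) for finite subsets S of N. Then F is submodular: for all subsets S ⊆ T ⊆ N and all i ∈ N with i ∉ T, F(T ∪ {i}) − F(T) ≤ F(S ∪ {i}) − F(S). -/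
lemma sqrt_diff_le {s t c : ℝ} (hs : 0 ≤ s) (hst : s ≤ t) (hc : 0 ≤ c) :
    Real.sqrt (t + c) - Real.sqrt t ≤ Real.sqrt (s + c) - Real.sqrt s := by
  have ht : 0 ≤ t := le_trans hs hst
  have h : Real.sqrt ((t + c) * s) ≤ Real.sqrt ((s + c) * t) :=
    Real.sqrt_le_sqrt (by nlinarith)
  rw [Real.sqrt_mul (by linarith), Real.sqrt_mul (by linarith)] at h
  have h1 := Real.sq_sqrt (show (0:ℝ) ≤ t + c by linarith)
  have h2 := Real.sq_sqrt (show (0:ℝ) ≤ s + c by linarith)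
  have h3 := Real.sq_sqrt hs
  have h4 := Real.sq_sqrt ht
  have n1 := Real.sqrt_nonneg (t + c)
  have n2 := Real.sqrt_nonneg (s + c)
  have n3 := Real.sqrt_nonneg s
  have n4 := Real.sqrt_nonneg t
  nlinarith [sq_nonneg (Real.sqrt (t+c) + Real.sqrt s - Real.sqrt (s+c) - Real.sqrt t),
    sq_nonneg (Real.sqrt (t+c) + Real.sqrt s + Real.sqrt (s+c) + Real.sqrt t)]

/-- Submodularity of the capacity usage set function
`F S = ∑_{i∈S} a i + σ √(∑_{i∈S} b i)`. -/
theorem stmt_6 (N : Type*) [Fintype N] [DecidableEq N]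
    (a b : N → ℝ) (ha : ∀ i, 0 ≤ a i) (hb : ∀ i, 0 ≤ b i)
    (σ : ℝ) (hσ : 0 ≤ σ)
    (F : Finset N → ℝ)
    (hF : ∀ S, F S = ∑ i ∈ S, a i + σ * Real.sqrt (∑ i ∈ S, b i))
    (S T : Finset N) (hST : S ⊆ T) (i : N) (hi : i ∉ T) :
    F (insert i T) - F T ≤ F (insert i S) - F S := by
  have hiS : i ∉ S := fun h => hi (hST h)
  rw [hF, hF, hF, hF, Finset.sum_insert hi, Finset.sum_insert hi,
    Finset.sum_insert hiS, Finset.sum_insert hiS]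
  have hsum : ∑ j ∈ S, b j ≤ ∑ j ∈ T, b j :=
    Finset.sum_le_sum_of_subset_of_nonneg hST (fun j _ _ => hb j)
  have hSnn : 0 ≤ ∑ j ∈ S, b j := Finset.sum_nonneg (fun j _ => hb j)
  have key := sqrt_diff_le hSnn hsum (hb i)
  have := mul_le_mul_of_nonneg_left key hσ
  have e1 : ∑ j ∈ T, b j + b i = b i + ∑ j ∈ T, b j := by ring
  have e2 : ∑ j ∈ S, b j + b i = b i + ∑ j ∈ S, b j := by ring
  rw [e1, e2] at this
  nlinarith [this]
end

section
/- (Optimality of the equidistant partition for the ℓ∞ error, Theorem 2.) Let h ≥ 2 be a natural number, α < β reals, and w : Fin h → ℝ monotone nondecreasing with w 0 = α and w (h−1) = β. Then the ℓ∞ error of the induced piecewise-linear over-estimator of q(t) = (c − t)², which equals max over pieces k of (w(k+1) − w(k))²/4, is at least (β − α)²/(4(h−1)²). Moreover, for the equidistant breakpoints w(k) = α + (k/(h−1))·(β − α), every gap equals (β − α)/(h−1), so the ℓ∞ error equals exactly (β − α)²/(4(h−1)²); hence the equidistant partition minimizes the ℓ∞ approximation error among all breakpoint sets of cardinality h. 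-/
/-- Optimality of the equidistant partition for the ℓ∞ error of the PWL
over-estimator of `q t = (c - t)^2`: every breakpoint set of cardinality `h`
has a piece whose error `(gap)^2/4` is at least `(β - α)^2 / (4 (h-1)^2)`, the
equidistant breakpoints have all gaps equal to `(β - α)/(h-1)`, and their ℓ∞
error equals exactly `(β - α)^2 / (4 (h-1)^2)`. -/
theorem stmt_15 (h : ℕ) (hh : 2 ≤ h) (c α β : ℝ) (hαβ : α < β)
    (w : Fin h → ℝ) (hmono : Monotone w)
    (h0 : w ⟨0, by omega⟩ = α) (hlast : w ⟨h - 1, by omega⟩ = β) :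
    (∃ k : ℕ, ∃ hk : k + 1 < h,
      (β - α) ^ 2 / (4 * ((h : ℝ) - 1) ^ 2) ≤
        (w ⟨k + 1, hk⟩ - w ⟨k, by omega⟩) ^ 2 / 4) ∧
    (∀ k : ℕ, k + 1 < h →
      (α + (((k : ℝ) + 1) / ((h : ℝ) - 1)) * (β - α))
        - (α + ((k : ℝ) / ((h : ℝ) - 1)) * (β - α)) = (β - α) / ((h : ℝ) - 1)) ∧
    ((β - α) / ((h : ℝ) - 1)) ^ 2 / 4 = (β - α) ^ 2 / (4 * ((h : ℝ) - 1) ^ 2) := by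
  have hne : ((h : ℝ) - 1) ≠ 0 := by
    have : (2 : ℝ) ≤ (h : ℝ) := by exact_mod_cast hh
    linarith
  have hpos : (0 : ℝ) < (h : ℝ) - 1 := by
    have : (2 : ℝ) ≤ (h : ℝ) := by exact_mod_cast hh
    linarith
  have h3 : ((β - α) / ((h : ℝ) - 1)) ^ 2 / 4 = (β - α) ^ 2 / (4 * ((h : ℝ) - 1) ^ 2) := by
    rw [div_pow, div_div, mul_comm (((h : ℝ) - 1) ^ 2) 4]
  refine ⟨?_, ?_, h3⟩
  · -- pigeonhole
    set d : ℝ := (β - α) / ((h : ℝ) - 1) with hd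
    have hd0 : 0 < d := div_pos (by linarith) hpos
    have hex : ∃ k : ℕ, ∃ hk : k + 1 < h, d ≤ w ⟨k + 1, hk⟩ - w ⟨k, by omega⟩ := by
      by_contra hcon
      push_neg at hcon
      set f : ℕ → ℝ := fun k => w ⟨min k (h - 1), by omega⟩ with hf
      have hsum : ∑ k ∈ Finset.range (h - 1), (f (k + 1) - f k) = f (h - 1) - f 0 :=
        Finset.sum_range_sub f (h - 1)
      have key : ∀ k (hk : k < h), f k = w ⟨k, hk⟩ := fun k hk =>
        congrArg w (Fin.ext (by simp only []; omega))
      have hfe : f (h - 1) - f 0 = β - α := by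
        rw [key (h - 1) (by omega), key 0 (by omega), hlast, h0]
      have hlt : ∑ k ∈ Finset.range (h - 1), (f (k + 1) - f k) <
          ∑ _k ∈ Finset.range (h - 1), d := by
        apply Finset.sum_lt_sum_of_nonempty
        · exact Finset.nonempty_range_iff.mpr (by omega)
        · intro k hk
          simp only [Finset.mem_range] at hk
          have hk1 : k + 1 < h := by omega
          rw [key (k + 1) hk1, key k (by omega)]
          exact hcon k hk1
      rw [hsum, hfe] at hlt
      rw [Finset.sum_const, Finset.card_range, nsmul_eq_mul] at hlt
      have hcast : ((h - 1 : ℕ) : ℝ) = (h : ℝ) - 1 := by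
        have : (1 : ℕ) ≤ h := by omega
        push_cast [this]; ring
      rw [hcast, hd, mul_div_cancel₀ _ hne] at hlt
      linarith
    obtain ⟨k, hk, hge⟩ := hex
    refine ⟨k, hk, ?_⟩
    rw [← h3]
    have : d ^ 2 ≤ (w ⟨k + 1, hk⟩ - w ⟨k, by omega⟩) ^ 2 :=
      pow_le_pow_left₀ hd0.le hge 2
    linarith
  · intro k hk
    field_simp
    ring
end
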